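/- Let (G,B,w) be a finite weighted graph with boundary and interior Ω. For any boundary k-form φ ∈ A^k(∂Ω), there exists a k-form ω ∈ A^k(G) with δdω = 0 on all k-cliques contained in Ω and ω = φ on boundary (k+1)-cliques. -/

import Mathlib

open scoped Classical

namespace GraphHodge


variable {X : Type*}

/-- A tuple of vertices forms a clique: any two distinct indices give adjacent vertices. -/
def IsTupleClique (G : SimpleGraph X) {m : ℕ} (v : Fin m → X) : Prop :=
  ∀ i j : Fin m, i ≠ j → G.Adj (v i) (v j)

/-- Indicator function of cliques. -/
noncomputable def cliqueInd (G : SimpleGraph X) {m : ℕ} (v : Fin m → X) : ℝ :=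
  if IsTupleClique G v then 1 else 0

/-- A `k`-form on a graph: skew-symmetric and supported on `(k+1)`-cliques. -/
def IsGraphForm (G : SimpleGraph X) (k : ℕ) (α : (Fin (k + 1) → X) → ℝ) : Prop :=
  (∀ v, ¬ IsTupleClique G v → α v = 0) ∧
  ∀ (σ : Equiv.Perm (Fin (k + 1))) (v : Fin (k + 1) → X),
    α (v ∘ σ) = ((Equiv.Perm.sign σ : ℤ) : ℝ) * α v

/-- The exterior differential of a `k`-form on a graph. -/
noncomputable def gd (G : SimpleGraph X) {k : ℕ} (α : (Fin (k + 1) → X) → ℝ) :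
    (Fin (k + 2) → X) → ℝ :=
  fun v => cliqueInd G v * ∑ j : Fin (k + 2), (-1 : ℝ) ^ (j : ℕ) * α (v ∘ j.succAbove)

/-- Tensor product of an `r`-form and an `s`-form on a graph. -/
noncomputable def gtensor (G : SimpleGraph X) {r s : ℕ}
    (α : (Fin (r + 1) → X) → ℝ) (β : (Fin (s + 1) → X) → ℝ) :
    (Fin (r + s + 1) → X) → ℝ :=
  fun v => cliqueInd G v * α (fun i => v ⟨i.1, by have := i.2; omega⟩) *
    β (fun i => v ⟨r + i.1, by have := i.2; omega⟩)

/-- Skew-symmetrization operator on functions of vertex tuples. -/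
noncomputable def skewSym {m : ℕ} (f : (Fin m → X) → ℝ) : (Fin m → X) → ℝ :=
  fun v => ((m.factorial : ℝ))⁻¹ *
    ∑ σ : Equiv.Perm (Fin m), ((Equiv.Perm.sign σ : ℤ) : ℝ) * f (v ∘ σ)

/-- Wedge product of graph forms: skew-symmetrization of the tensor product. -/
noncomputable def gwedge (G : SimpleGraph X) {r s : ℕ}
    (α : (Fin (r + 1) → X) → ℝ) (β : (Fin (s + 1) → X) → ℝ) :
    (Fin (r + s + 1) → X) → ℝ :=
  skewSym (gtensor G α β)

/-- A positive weight on all cliques of a graph, symmetric in its arguments and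
vanishing off cliques. -/
structure GraphWeight (G : SimpleGraph X) where
  w : ∀ {m : ℕ}, (Fin (m + 1) → X) → ℝ
  symm : ∀ {m : ℕ} (σ : Equiv.Perm (Fin (m + 1))) (v : Fin (m + 1) → X), w (v ∘ σ) = w v
  pos : ∀ {m : ℕ} (v : Fin (m + 1) → X), IsTupleClique G v → 0 < w v
  eq_zero : ∀ {m : ℕ} (v : Fin (m + 1) → X), ¬ IsTupleClique G v → w v = 0

variable {G : SimpleGraph X}

/-- The weighted inner product on `k`-forms of a finite weighted graph. -/
noncomputable def formInner [Fintype X] (w : GraphWeight G) {k : ℕ}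
    (α β : (Fin (k + 1) → X) → ℝ) : ℝ :=
  (((k + 1).factorial : ℝ))⁻¹ * ∑ v : Fin (k + 1) → X, α v * β v * w.w v

/-- The codifferential (formal adjoint of `gd`) on a finite weighted graph. -/
noncomputable def gdelta [Fintype X] (w : GraphWeight G) {k : ℕ}
    (α : (Fin (k + 2) → X) → ℝ) : (Fin (k + 1) → X) → ℝ :=
  fun v => (w.w v)⁻¹ * ∑ u : X, α (Fin.cons u v) * w.w (Fin.cons u v)

/-- `(G, B)` is a graph with boundary `B`: no edges inside `B`, and every boundary
vertex is adjacent to some interior vertex. -/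
def IsBoundary (G : SimpleGraph X) (B : Set X) : Prop :=
  (∀ a ∈ B, ∀ b ∈ B, ¬ G.Adj a b) ∧ ∀ b ∈ B, ∃ a, a ∉ B ∧ G.Adj b a

/-- A boundary tuple: a clique whose first vertex is in `B` and the rest interior. -/
def IsBdryTuple (G : SimpleGraph X) (B : Set X) {k : ℕ} (v : Fin (k + 1) → X) : Prop :=
  IsTupleClique G v ∧ v 0 ∈ B ∧ ∀ i : Fin k, v i.succ ∉ B

/-- A boundary `k`-form: supported on boundary `(k+1)`-cliques and skew-symmetric in
its last `k` variables. -/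
def IsBdryForm (G : SimpleGraph X) (B : Set X) (k : ℕ) (φ : (Fin (k + 1) → X) → ℝ) : Prop :=
  (∀ v, ¬ IsBdryTuple G B v → φ v = 0) ∧
  ∀ (σ : Equiv.Perm (Fin k)) (v : Fin (k + 1) → X),
    φ (Fin.cons (v 0) (fun i => v (σ i).succ)) = ((Equiv.Perm.sign σ : ℤ) : ℝ) * φ v

/-- Inner product over tuples entirely inside the interior `Ω = Bᶜ`. -/
noncomputable def innerInt [Fintype X] (w : GraphWeight G) (B : Set X) {k : ℕ}
    (α β : (Fin (k + 1) → X) → ℝ) : ℝ :=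
  (((k + 1).factorial : ℝ))⁻¹ *
    ∑ v : Fin (k + 1) → X, (if ∀ i, v i ∉ B then (1 : ℝ) else 0) * (α v * β v * w.w v)

/-- Boundary inner product: first vertex in `B`, the others interior. -/
noncomputable def innerBdry [Fintype X] (w : GraphWeight G) (B : Set X) {k : ℕ}
    (α β : (Fin (k + 1) → X) → ℝ) : ℝ :=
  ((k.factorial : ℝ))⁻¹ *
    ∑ v : Fin (k + 1) → X,
      (if v 0 ∈ B ∧ ∀ i : Fin k, v i.succ ∉ B then (1 : ℝ) else 0) * (α v * β v * w.w v)

/-- The normal-trace operator `𝐍` on `(k+1)`-forms. -/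
noncomputable def Nop [Fintype X] (w : GraphWeight G) (B : Set X) {k : ℕ}
    (α : (Fin (k + 2) → X) → ℝ) : (Fin (k + 1) → X) → ℝ :=
  fun v => (w.w v)⁻¹ *
    ∑ u : X, (if u ∉ B then (1 : ℝ) else 0) * α (Fin.cons u v) * w.w (Fin.cons u v)

/-- The Dirichlet-trace operator `𝐃`: forget the boundary vertex. -/
def Dop {k : ℕ} (α : (Fin (k + 1) → X) → ℝ) : (Fin (k + 2) → X) → ℝ :=
  fun v => α (fun i => v i.succ)


/-! ### Auxiliary lemmas -/

/-- real sign -/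
noncomputable def sr {m : ℕ} (σ : Equiv.Perm (Fin m)) : ℝ := ((Equiv.Perm.sign σ : ℤ) : ℝ)

lemma sr_mul {m : ℕ} (σ τ : Equiv.Perm (Fin m)) : sr (σ * τ) = sr σ * sr τ := by simp [sr]

lemma sr_sq {m : ℕ} (σ : Equiv.Perm (Fin m)) : sr σ * sr σ = 1 := by
  rcases Int.units_eq_one_or (Equiv.Perm.sign σ) with h | h <;> simp [sr, h]

lemma sr_inv {m : ℕ} (σ : Equiv.Perm (Fin m)) : sr σ⁻¹ = sr σ := by simp [sr]

lemma tupleClique_comp {m : ℕ} (σ : Equiv.Perm (Fin m)) {v : Fin m → X}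
    (h : IsTupleClique G v) : IsTupleClique G (v ∘ σ) := by
  intro i j hij
  exact h (σ i) (σ j) (fun hc => hij (σ.injective hc))

lemma tupleClique_comp_iff {m : ℕ} (σ : Equiv.Perm (Fin m)) (v : Fin m → X) :
    IsTupleClique G (v ∘ σ) ↔ IsTupleClique G v := by
  constructor
  · intro h
    have := tupleClique_comp σ⁻¹ h
    convert this using 1
    funext i; simp
  · exact tupleClique_comp σ

lemma cliqueInd_comp {m : ℕ} (σ : Equiv.Perm (Fin m)) (v : Fin m → X) :
    cliqueInd G (v ∘ σ) = cliqueInd G v := by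
  simp only [cliqueInd, tupleClique_comp_iff]

lemma clique_tail {m : ℕ} {u : X} {v : Fin (m + 1) → X}
    (h : IsTupleClique G (Fin.cons u v)) : IsTupleClique G v := by
  intro i j hij
  have := h i.succ j.succ (by simpa using hij)
  simpa using this

/-- reindex a sum over tuples by precomposition with a permutation -/
lemma sum_comp_perm [Fintype X] {m : ℕ} (e : Equiv.Perm (Fin m)) (F : (Fin m → X) → ℝ) :
    ∑ z : Fin m → X, F (z ∘ e) = ∑ z : Fin m → X, F z :=
  Equiv.sum_comp (Equiv.piCongrLeft' (fun _ => X) e.symm) F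

/-- reindex a sum over permutations by left multiplication -/
lemma sum_sign_comp {m : ℕ} (g : (Fin m → X) → ℝ) (σ : Equiv.Perm (Fin m)) (v : Fin m → X) :
    ∑ τ : Equiv.Perm (Fin m), sr τ * g (v ∘ σ ∘ τ) =
      sr σ * ∑ τ : Equiv.Perm (Fin m), sr τ * g (v ∘ τ) := by
  rw [Finset.mul_sum]
  refine Fintype.sum_equiv (Equiv.mulLeft σ) _ _ ?_
  intro τ
  show sr τ * g (v ∘ σ ∘ τ) = sr σ * (sr (σ * τ) * g (v ∘ (σ * τ : Equiv.Perm (Fin m))))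
  have h1 : v ∘ ⇑σ ∘ ⇑τ = v ∘ ⇑(σ * τ) := rfl
  rw [h1, sr_mul]
  linear_combination (-(sr τ * g (v ∘ ⇑(σ * τ)))) * sr_sq σ

/-- the bijection `(j, τ) ↦ σ` with `σ 0 = j`, `σ (succ i) = j.succAbove (τ i)`. -/
noncomputable def permCons {n : ℕ} (p : Fin (n + 1) × Equiv.Perm (Fin n)) :
    Equiv.Perm (Fin (n + 1)) :=
  (Fin.cycleRange p.1)⁻¹ * Equiv.Perm.decomposeFin.symm (0, p.2)

lemma permCons_zero {n : ℕ} (j : Fin (n + 1)) (τ : Equiv.Perm (Fin n)) :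
    permCons (j, τ) 0 = j := by
  simp only [permCons, Equiv.Perm.mul_apply, Equiv.Perm.decomposeFin_symm_apply_zero]
  exact Fin.cycleRange_symm_zero j

lemma permCons_succ {n : ℕ} (j : Fin (n + 1)) (τ : Equiv.Perm (Fin n)) (i : Fin n) :
    permCons (j, τ) i.succ = j.succAbove (τ i) := by
  simp only [permCons, Equiv.Perm.mul_apply, Equiv.Perm.decomposeFin_symm_apply_succ,
    Equiv.swap_self, Equiv.refl_apply]
  exact Fin.cycleRange_symm_succ j (τ i)

lemma sr_permCons {n : ℕ} (j : Fin (n + 1)) (τ : Equiv.Perm (Fin n)) :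
    sr (permCons (j, τ)) = (-1 : ℝ) ^ (j : ℕ) * sr τ := by
  simp only [permCons, sr, map_mul, map_inv]
  rw [Equiv.Perm.decomposeFin.symm_sign, Fin.sign_cycleRange]
  simp

lemma permCons_bijective {n : ℕ} : Function.Bijective (permCons (n := n)) := by
  rw [Fintype.bijective_iff_injective_and_card]
  constructor
  · rintro ⟨j, τ⟩ ⟨j', τ'⟩ h
    have hj : j = j' := by rw [← permCons_zero j τ, ← permCons_zero j' τ', h]
    subst hj
    have hτ : τ = τ' := by
      refine Equiv.ext fun i => ?_
      have := congrArg (fun σ : Equiv.Perm (Fin (n+1)) => σ i.succ) h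
      simp only [permCons_succ] at this
      exact Fin.succAbove_right_injective this
    rw [hτ]
  · simp [Fintype.card_perm, Nat.factorial_succ]

/-- Key combinatorial lemma. -/
lemma sum_perm_eq [Fintype X] {n : ℕ} (α : (Fin (n + 1) → X) → ℝ)
    (hα : ∀ (σ : Equiv.Perm (Fin (n + 1))) (v : Fin (n + 1) → X), α (v ∘ σ) = sr σ * α v)
    (v : Fin (n + 2) → X) :
    ∑ σ : Equiv.Perm (Fin (n + 2)), sr σ * α (v ∘ σ ∘ Fin.succ) =
      ((n + 1).factorial : ℝ) * ∑ j : Fin (n + 2), (-1 : ℝ) ^ (j : ℕ) * α (v ∘ j.succAbove) := by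
  rw [← Fintype.sum_bijective permCons permCons_bijective _
    (fun σ => sr σ * α (v ∘ σ ∘ Fin.succ)) (fun _ => rfl)]
  rw [Fintype.sum_prod_type]
  have key : ∀ (j : Fin (n + 2)) (τ : Equiv.Perm (Fin (n + 1))),
      sr (permCons (j, τ)) * α (v ∘ permCons (j, τ) ∘ Fin.succ) =
        (-1 : ℝ) ^ (j : ℕ) * α (v ∘ j.succAbove) := by
    intro j τ
    have h1 : v ∘ permCons (j, τ) ∘ Fin.succ = (v ∘ j.succAbove) ∘ τ := by
      funext i
      simp [Function.comp, permCons_succ]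
    rw [h1, hα τ, sr_permCons]
    linear_combination ((-1 : ℝ) ^ (j : ℕ) * α (v ∘ j.succAbove)) * sr_sq τ
  calc ∑ j : Fin (n + 2), ∑ τ : Equiv.Perm (Fin (n + 1)),
        sr (permCons (j, τ)) * α (v ∘ permCons (j, τ) ∘ Fin.succ)
      = ∑ j : Fin (n + 2), ∑ _τ : Equiv.Perm (Fin (n + 1)),
        (-1 : ℝ) ^ (j : ℕ) * α (v ∘ j.succAbove) := by
        refine Finset.sum_congr rfl fun j _ => Finset.sum_congr rfl fun τ _ => key j τ
    _ = ((n + 1).factorial : ℝ) * ∑ j : Fin (n + 2), (-1 : ℝ) ^ (j : ℕ) * α (v ∘ j.succAbove) := by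
        rw [Finset.mul_sum]
        refine Finset.sum_congr rfl fun j _ => ?_
        rw [Finset.sum_const, Finset.card_univ, Fintype.card_perm, Fintype.card_fin,
          nsmul_eq_mul]

lemma skewSym_def {m : ℕ} (f : (Fin m → X) → ℝ) (v : Fin m → X) :
    skewSym f v = ((m.factorial : ℝ))⁻¹ * ∑ σ : Equiv.Perm (Fin m), sr σ * f (v ∘ σ) := rfl

lemma skewSym_comp {m : ℕ} (f : (Fin m → X) → ℝ) (σ : Equiv.Perm (Fin m)) (v : Fin m → X) :
    skewSym f (v ∘ σ) = sr σ * skewSym f v := by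
  rw [skewSym_def, skewSym_def]
  have h : (∑ τ : Equiv.Perm (Fin m), sr τ * f ((v ∘ σ) ∘ τ)) =
      sr σ * ∑ τ : Equiv.Perm (Fin m), sr τ * f (v ∘ τ) := sum_sign_comp f σ v
  rw [h]; ring

lemma w_nonneg [Fintype X] (w : GraphWeight G) {m : ℕ} (v : Fin (m + 1) → X) : 0 ≤ w.w v := by
  by_cases h : IsTupleClique G v
  · exact le_of_lt (w.pos v h)
  · rw [w.eq_zero v h]

lemma cliqueInd_mul_w [Fintype X] (w : GraphWeight G) {m : ℕ} (v : Fin (m + 1) → X) :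
    cliqueInd G v * w.w v = w.w v := by
  by_cases h : IsTupleClique G v
  · rw [cliqueInd, if_pos h, one_mul]
  · rw [w.eq_zero v h, mul_zero]

lemma sr_cycleRange {n : ℕ} (j : Fin (n + 1)) :
    sr (Fin.cycleRange j) = (-1 : ℝ) ^ (j : ℕ) := by
  rw [sr, Fin.sign_cycleRange]
  push_cast
  rfl

lemma neg_one_pow_mul_self (n : ℕ) : (-1 : ℝ) ^ n * (-1 : ℝ) ^ n = 1 := by
  rw [← pow_add]
  exact Even.neg_one_pow ⟨n, rfl⟩

/-- `gd` of a skew function, rewritten via a sum over permutations. -/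
lemma gd_eq {k : ℕ} (α : (Fin (k + 1) → X) → ℝ)
    (hα : ∀ (σ : Equiv.Perm (Fin (k + 1))) (v : Fin (k + 1) → X), α (v ∘ σ) = sr σ * α v)
    [Fintype X] (v : Fin (k + 2) → X) :
    gd G α v = (((k + 1).factorial : ℝ))⁻¹ * cliqueInd G v *
      ∑ σ : Equiv.Perm (Fin (k + 2)), sr σ * α (v ∘ σ ∘ Fin.succ) := by
  rw [sum_perm_eq α hα v, gd]
  have h : ((k + 1).factorial : ℝ) ≠ 0 := Nat.cast_ne_zero.mpr (Nat.factorial_ne_zero _)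
  field_simp

/-- `gd` of a skew function is skew. -/
lemma gd_skew {k : ℕ} (α : (Fin (k + 1) → X) → ℝ)
    (hα : ∀ (σ : Equiv.Perm (Fin (k + 1))) (v : Fin (k + 1) → X), α (v ∘ σ) = sr σ * α v)
    [Fintype X] (σ : Equiv.Perm (Fin (k + 2))) (v : Fin (k + 2) → X) :
    gd G α (v ∘ σ) = sr σ * gd G α v := by
  rw [gd_eq α hα, gd_eq α hα, cliqueInd_comp]
  have h : (∑ τ : Equiv.Perm (Fin (k + 2)), sr τ * α ((v ∘ σ) ∘ τ ∘ Fin.succ)) =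
      sr σ * ∑ τ : Equiv.Perm (Fin (k + 2)), sr τ * α (v ∘ τ ∘ Fin.succ) :=
    sum_sign_comp (fun z => α (z ∘ Fin.succ)) σ v
  rw [h]; ring

lemma cons_comp_permCons {k : ℕ} (u : X) (v : Fin (k + 1) → X) (σ : Equiv.Perm (Fin (k + 1))) :
    (Fin.cons u v : Fin (k + 2) → X) ∘ permCons (0, σ) = Fin.cons u (v ∘ σ) := by
  funext i
  refine Fin.cases ?_ (fun i => ?_) i
  · simp [permCons_zero]
  · simp [permCons_succ, Fin.succAbove_of_castSucc_lt]

/-- `gdelta` of a skew function is skew. -/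
lemma gdelta_skew [Fintype X] (w : GraphWeight G) {k : ℕ} (β : (Fin (k + 2) → X) → ℝ)
    (hβ : ∀ (σ : Equiv.Perm (Fin (k + 2))) (z : Fin (k + 2) → X), β (z ∘ σ) = sr σ * β z)
    (σ : Equiv.Perm (Fin (k + 1))) (v : Fin (k + 1) → X) :
    gdelta w β (v ∘ σ) = sr σ * gdelta w β v := by
  have key : ∀ u : X, β (Fin.cons u (v ∘ σ)) * w.w (Fin.cons u (v ∘ σ)) =
      sr σ * (β (Fin.cons u v) * w.w (Fin.cons u v)) := by
    intro u
    have h1 : (Fin.cons u (v ∘ σ) : Fin (k + 2) → X) = (Fin.cons u v) ∘ permCons (0, σ) :=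
      (cons_comp_permCons u v σ).symm
    have h2 : sr (permCons ((0 : Fin (k + 2)), σ)) = sr σ := by rw [sr_permCons]; simp
    rw [h1, hβ (permCons (0, σ)), w.symm (permCons (0, σ)), h2]; ring
  rw [gdelta, gdelta, w.symm σ v]
  rw [Finset.sum_congr rfl (fun u _ => key u), ← Finset.mul_sum]
  ring

/-- Adjointness of `gd` and `gdelta` against a skew cofactor. -/
lemma adjoint_gd_gdelta [Fintype X] (w : GraphWeight G) {k : ℕ}
    (α : (Fin (k + 1) → X) → ℝ) (β : (Fin (k + 2) → X) → ℝ)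
    (hβ : ∀ (σ : Equiv.Perm (Fin (k + 2))) (z : Fin (k + 2) → X), β (z ∘ σ) = sr σ * β z) :
    formInner w (gd G α) β = formInner w α (gdelta w β) := by
  have hfac : ((k + 1).factorial : ℝ) ≠ 0 := Nat.cast_ne_zero.mpr (Nat.factorial_ne_zero _)
  -- Step 1: expand the LHS and exchange sums
  have step1 : formInner w (gd G α) β = (((k + 2).factorial : ℝ))⁻¹ *
      ∑ j : Fin (k + 2), ∑ z : Fin (k + 2) → X,
        (-1 : ℝ) ^ (j : ℕ) * (cliqueInd G z * α (z ∘ j.succAbove) * β z * w.w z) := by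
    rw [formInner, Finset.sum_comm]
    congr 1
    refine Finset.sum_congr rfl fun z _ => ?_
    rw [gd, Finset.mul_sum, Finset.sum_mul, Finset.sum_mul]
    refine Finset.sum_congr rfl fun j _ => by ring
  -- Step 2: each of the `k+2` inner sums equals the `j = 0` sum
  have step2 : ∀ j : Fin (k + 2),
      (∑ z : Fin (k + 2) → X,
        (-1 : ℝ) ^ (j : ℕ) * (cliqueInd G z * α (z ∘ j.succAbove) * β z * w.w z)) =
      ∑ z : Fin (k + 2) → X, α (z ∘ Fin.succ) * β z * w.w z := by
    intro j
    rw [← sum_comp_perm (Fin.cycleRange j)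
      (fun z => (-1 : ℝ) ^ (j : ℕ) * (cliqueInd G z * α (z ∘ j.succAbove) * β z * w.w z))]
    refine Finset.sum_congr rfl fun z _ => ?_
    have h1 : (z ∘ Fin.cycleRange j) ∘ j.succAbove = z ∘ Fin.succ := by
      funext i
      simp [Function.comp, Fin.cycleRange_succAbove]
    rw [h1, cliqueInd_comp, hβ, w.symm, sr_cycleRange]
    have h2 := neg_one_pow_mul_self (j : ℕ)
    have h3 := cliqueInd_mul_w w z
    linear_combination (cliqueInd G z * α (z ∘ Fin.succ) * β z * w.w z) * h2 +
      (α (z ∘ Fin.succ) * β z) * h3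
  -- Step 3: collapse the `j`-sum
  have step3 : formInner w (gd G α) β =
      (((k + 1).factorial : ℝ))⁻¹ * ∑ z : Fin (k + 2) → X, α (z ∘ Fin.succ) * β z * w.w z := by
    rw [step1]
    rw [Finset.sum_congr rfl (fun j _ => step2 j), Finset.sum_const, Finset.card_univ,
      Fintype.card_fin, nsmul_eq_mul]
    have h4 : ((k + 2).factorial : ℝ) = (k + 2) * ((k + 1).factorial : ℝ) := by
      rw [show k + 2 = (k + 1) + 1 from rfl, Nat.factorial_succ]
      push_cast
      ring
    rw [h4]
    have h5 : ((k : ℝ) + 2) ≠ 0 := by positivity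
    field_simp
    push_cast
    ring
  -- Step 4: split the sum over tuples via `Fin.cons`
  have step4 : (∑ z : Fin (k + 2) → X, α (z ∘ Fin.succ) * β z * w.w z) =
      ∑ t : Fin (k + 1) → X, ∑ u : X, α t * (β (Fin.cons u t) * w.w (Fin.cons u t)) := by
    rw [← Equiv.sum_comp (Fin.consEquiv (fun _ => X))
      (fun z => α (z ∘ Fin.succ) * β z * w.w z), Fintype.sum_prod_type, Finset.sum_comm]
    refine Finset.sum_congr rfl fun t _ => Finset.sum_congr rfl fun u _ => ?_
    have h1 : ((Fin.consEquiv (fun _ => X)) (u, t) : Fin (k + 2) → X) = Fin.cons u t := rfl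
    rw [h1]
    have h2 : (Fin.cons u t : Fin (k + 2) → X) ∘ Fin.succ = t := by
      funext i; simp
    rw [h2]; ring
  -- Finish
  rw [step3, step4, formInner]
  congr 1
  refine Finset.sum_congr rfl fun t _ => ?_
  rw [gdelta]
  by_cases hc : IsTupleClique G t
  · have hw : w.w t ≠ 0 := ne_of_gt (w.pos t hc)
    rw [show α t * ((w.w t)⁻¹ * ∑ u : X, β (Fin.cons u t) * w.w (Fin.cons u t)) * w.w t
        = ((w.w t)⁻¹ * w.w t) * (α t * ∑ u : X, β (Fin.cons u t) * w.w (Fin.cons u t)) from by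
          ring,
      inv_mul_cancel₀ hw, one_mul, Finset.mul_sum]
  · have hw : w.w t = 0 := w.eq_zero t hc
    have hz : ∀ u : X, w.w (Fin.cons u t) = 0 := fun u =>
      w.eq_zero _ (fun hcl => hc (clique_tail hcl))
    simp [hw, hz]



/-! ### Inner product and bilinear machinery -/

lemma formInner_comm [Fintype X] (w : GraphWeight G) {k : ℕ}
    (α β : (Fin (k + 1) → X) → ℝ) : formInner w α β = formInner w β α := by
  rw [formInner, formInner]
  congr 1
  exact Finset.sum_congr rfl fun v _ => by ring

lemma formInner_self_zero [Fintype X] (w : GraphWeight G) {k : ℕ}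
    {γ : (Fin (k + 1) → X) → ℝ} (h : formInner w γ γ = 0) (v : Fin (k + 1) → X) :
    γ v * w.w v = 0 := by
  have hfac : (((k + 1).factorial : ℝ))⁻¹ ≠ 0 := by
    simp [Nat.factorial_ne_zero]
  rw [formInner] at h
  have hsum : (∑ z : Fin (k + 1) → X, γ z * γ z * w.w z) = 0 := by
    rcases mul_eq_zero.mp h with h' | h'
    · exact absurd h' hfac
    · exact h'
  have hterm : ∀ z : Fin (k + 1) → X, γ z * γ z * w.w z = 0 := by
    have hnn : ∀ z ∈ (Finset.univ : Finset (Fin (k + 1) → X)), 0 ≤ γ z * γ z * w.w z :=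
      fun z _ => mul_nonneg (mul_self_nonneg _) (w_nonneg w z)
    intro z
    exact (Finset.sum_eq_zero_iff_of_nonneg hnn).mp hsum z (Finset.mem_univ z)
  rcases mul_eq_zero.mp (hterm v) with h' | h'
  · rcases mul_self_eq_zero.mp h' with h''
    rw [h'', zero_mul]
  · rw [h', mul_zero]

/-- `gd` as a linear map. -/
noncomputable def gdLM (G : SimpleGraph X) [Fintype X] (k : ℕ) :
    ((Fin (k + 1) → X) → ℝ) →ₗ[ℝ] ((Fin (k + 2) → X) → ℝ) where
  toFun := gd G
  map_add' α β := by
    funext v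
    simp only [gd, Pi.add_apply, Function.comp_apply, mul_add, Finset.mul_sum,
      Finset.sum_add_distrib]
  map_smul' c α := by
    funext v
    simp only [gd, Pi.smul_apply, Function.comp_apply, smul_eq_mul, RingHom.id_apply,
      Finset.mul_sum]
    exact Finset.sum_congr rfl fun j _ => by ring

/-- `formInner` as a bilinear map. -/
noncomputable def formInnerLM [Fintype X] (w : GraphWeight G) (k : ℕ) :
    ((Fin (k + 1) → X) → ℝ) →ₗ[ℝ] ((Fin (k + 1) → X) → ℝ) →ₗ[ℝ] ℝ :=
  LinearMap.mk₂ ℝ (formInner w)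
    (fun a b c => by
      simp only [formInner, Pi.add_apply, add_mul, Finset.sum_add_distrib, mul_add])
    (fun r a b => by
      simp only [formInner, Pi.smul_apply, smul_eq_mul, Finset.mul_sum]
      exact Finset.sum_congr rfl fun v _ => by ring)
    (fun a b c => by
      simp only [formInner, Pi.add_apply, mul_add, add_mul, Finset.sum_add_distrib])
    (fun r a b => by
      simp only [formInner, Pi.smul_apply, smul_eq_mul, Finset.mul_sum]
      exact Finset.sum_congr rfl fun v _ => by ring)

/-- The space of graph `k`-forms vanishing on boundary tuples. -/
noncomputable def Usub (G : SimpleGraph X) (B : Set X) (k : ℕ) :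
    Submodule ℝ ((Fin (k + 1) → X) → ℝ) where
  carrier := {ψ | (∀ v, ¬ IsTupleClique G v → ψ v = 0) ∧
    (∀ (σ : Equiv.Perm (Fin (k + 1))) (v : Fin (k + 1) → X), ψ (v ∘ σ) = sr σ * ψ v) ∧
    ∀ v, IsBdryTuple G B v → ψ v = 0}
  add_mem' := by
    rintro a b ⟨ha1, ha2, ha3⟩ ⟨hb1, hb2, hb3⟩
    refine ⟨fun v hv => ?_, fun σ v => ?_, fun v hv => ?_⟩
    · simp [ha1 v hv, hb1 v hv]
    · simp only [Pi.add_apply, ha2 σ v, hb2 σ v]; ring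
    · simp [ha3 v hv, hb3 v hv]
  zero_mem' := by
    refine ⟨fun v _ => rfl, fun σ v => by simp, fun v _ => rfl⟩
  smul_mem' := by
    rintro r a ⟨ha1, ha2, ha3⟩
    refine ⟨fun v hv => ?_, fun σ v => ?_, fun v hv => ?_⟩
    · simp [ha1 v hv]
    · simp only [Pi.smul_apply, smul_eq_mul, ha2 σ v]; ring
    · simp [ha3 v hv]



/-! ### The boundary extension and the localized test form -/

/-- Extension of a boundary form to a graph form. -/
noncomputable def bdryExt (G : SimpleGraph X) (B : Set X) {k : ℕ}
    (φ : (Fin (k + 1) → X) → ℝ) : (Fin (k + 1) → X) → ℝ :=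
  fun z => ((k : ℝ) + 1) * (cliqueInd G z * skewSym (fun y => if y 0 ∈ B then φ y else 0) z)

lemma bdryExt_support {B : Set X} {k : ℕ} (φ : (Fin (k + 1) → X) → ℝ) :
    ∀ v, ¬ IsTupleClique G v → bdryExt G B φ v = 0 := by
  intro v hv
  simp [bdryExt, cliqueInd, hv]

lemma bdryExt_skew {B : Set X} {k : ℕ} (φ : (Fin (k + 1) → X) → ℝ)
    (σ : Equiv.Perm (Fin (k + 1))) (v : Fin (k + 1) → X) :
    bdryExt G B φ (v ∘ σ) = sr σ * bdryExt G B φ v := by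
  simp only [bdryExt, cliqueInd_comp, skewSym_comp]
  ring

lemma cons_eq_comp_permCons {k : ℕ} (v : Fin (k + 1) → X) (τ : Equiv.Perm (Fin k)) :
    v ∘ permCons ((0 : Fin (k + 1)), τ) = Fin.cons (v 0) (fun i => v (τ i).succ) := by
  funext i
  refine Fin.cases ?_ (fun i => ?_) i
  · simp [permCons_zero]
  · simp [permCons_succ, Fin.succAbove_of_castSucc_lt]

lemma bdryExt_bdry {B : Set X} {k : ℕ} (φ : (Fin (k + 1) → X) → ℝ)
    (hφ : IsBdryForm G B k φ) :
    ∀ v, IsBdryTuple G B v → bdryExt G B φ v = φ v := by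
  rintro v ⟨hcl, h0, hint⟩
  have hskew : skewSym (fun y => if y 0 ∈ B then φ y else 0) v =
      (((k + 1).factorial : ℝ))⁻¹ * ((k.factorial : ℝ) * φ v) := by
    rw [skewSym_def]
    congr 1
    rw [← Fintype.sum_bijective permCons permCons_bijective _
      (fun σ => sr σ * (if (v ∘ σ) 0 ∈ B then φ (v ∘ σ) else 0)) (fun _ => rfl),
      Fintype.sum_prod_type, Fin.sum_univ_succ]
    have hzero : ∀ i : Fin k, (∑ τ : Equiv.Perm (Fin k), sr (permCons (i.succ, τ)) *
        (if (v ∘ permCons (i.succ, τ)) 0 ∈ B then φ (v ∘ permCons (i.succ, τ)) else 0)) = 0 := by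
      intro i
      refine Finset.sum_eq_zero fun τ _ => ?_
      have hv0 : (v ∘ permCons (i.succ, τ)) 0 = v i.succ := by
        rw [Function.comp_apply, permCons_zero]
      rw [if_neg (by rw [hv0]; exact hint i), mul_zero]
    have hmain : (∑ τ : Equiv.Perm (Fin k), sr (permCons ((0 : Fin (k + 1)), τ)) *
        (if (v ∘ permCons ((0 : Fin (k + 1)), τ)) 0 ∈ B
          then φ (v ∘ permCons ((0 : Fin (k + 1)), τ)) else 0)) = (k.factorial : ℝ) * φ v := by
      have hterm : ∀ τ : Equiv.Perm (Fin k), sr (permCons ((0 : Fin (k + 1)), τ)) *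
          (if (v ∘ permCons ((0 : Fin (k + 1)), τ)) 0 ∈ B
            then φ (v ∘ permCons ((0 : Fin (k + 1)), τ)) else 0) = φ v := by
        intro τ
        have hv0 : (v ∘ permCons ((0 : Fin (k + 1)), τ)) 0 = v 0 := by
          rw [Function.comp_apply, permCons_zero]
        rw [if_pos (by rw [hv0]; exact h0)]
        rw [cons_eq_comp_permCons v τ, hφ.2 τ v]
        have h2 : sr (permCons ((0 : Fin (k + 1)), τ)) = sr τ := by
          rw [sr_permCons]; simp
        rw [h2]
        show sr τ * (sr τ * φ v) = φ v
        linear_combination (φ v) * sr_sq τ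
      rw [Finset.sum_congr rfl (fun τ _ => hterm τ), Finset.sum_const, Finset.card_univ,
        Fintype.card_perm, Fintype.card_fin, nsmul_eq_mul]
    rw [hmain]
    rw [Finset.sum_congr rfl (fun i _ => hzero i), Finset.sum_const, smul_zero, add_zero]
  rw [bdryExt, hskew, cliqueInd, if_pos hcl]
  have hfac : ((k + 1).factorial : ℝ) = ((k : ℝ) + 1) * (k.factorial : ℝ) := by
    rw [Nat.factorial_succ]; push_cast; ring
  have hk : (k.factorial : ℝ) ≠ 0 := Nat.cast_ne_zero.mpr (Nat.factorial_ne_zero _)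
  have hk1 : ((k : ℝ) + 1) ≠ 0 := by positivity
  rw [hfac]
  field_simp

/-- The localized test form at an interior clique. -/
noncomputable def testForm (G : SimpleGraph X) {k : ℕ} (v : Fin (k + 1) → X) :
    (Fin (k + 1) → X) → ℝ :=
  fun z => cliqueInd G z * skewSym (fun y => if y = v then (1 : ℝ) else 0) z

lemma testForm_support {k : ℕ} (v : Fin (k + 1) → X) :
    ∀ z, ¬ IsTupleClique G z → testForm G v z = 0 := by
  intro z hz
  simp [testForm, cliqueInd, hz]

lemma testForm_skew {k : ℕ} (v : Fin (k + 1) → X) (σ : Equiv.Perm (Fin (k + 1)))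
    (z : Fin (k + 1) → X) : testForm G v (z ∘ σ) = sr σ * testForm G v z := by
  simp only [testForm, cliqueInd_comp, skewSym_comp]
  ring

lemma testForm_bdry {B : Set X} {k : ℕ} (v : Fin (k + 1) → X) (hint : ∀ i, v i ∉ B) :
    ∀ z, IsBdryTuple G B z → testForm G v z = 0 := by
  rintro z ⟨hzc, hz0, hzint⟩
  have hz : skewSym (fun y => if y = v then (1 : ℝ) else 0) z = 0 := by
    rw [skewSym_def]
    rw [Finset.sum_eq_zero, mul_zero]
    intro σ _
    rw [if_neg, mul_zero]
    intro hzv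
    have h1 : z 0 = v (σ⁻¹ 0) := by
      have := congrFun hzv (σ⁻¹ 0)
      rwa [Function.comp_apply, (by simp : σ (σ⁻¹ 0) = 0)] at this
    exact hint (σ⁻¹ 0) (h1 ▸ hz0)
  simp [testForm, hz]

lemma comp_eq_iff {m : ℕ} (z v : Fin m → X) (σ : Equiv.Perm (Fin m)) :
    z ∘ σ = v ↔ z = v ∘ ⇑σ⁻¹ := by
  constructor
  · intro h
    funext i
    have := congrFun h (σ⁻¹ i)
    rwa [Function.comp_apply, (by simp : σ (σ⁻¹ i) = i)] at this
  · intro h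
    funext i
    rw [h]
    simp

lemma testForm_inner [Fintype X] (w : GraphWeight G) {k : ℕ} (v : Fin (k + 1) → X)
    (hcl : IsTupleClique G v) (γ : (Fin (k + 1) → X) → ℝ)
    (hγ : ∀ (σ : Equiv.Perm (Fin (k + 1))) (z : Fin (k + 1) → X), γ (z ∘ σ) = sr σ * γ z) :
    formInner w (testForm G v) γ = (((k + 1).factorial : ℝ))⁻¹ * (γ v * w.w v) := by
  have hfac : ((k + 1).factorial : ℝ) ≠ 0 := Nat.cast_ne_zero.mpr (Nat.factorial_ne_zero _)
  have h1 : ∀ z : Fin (k + 1) → X, testForm G v z * γ z * w.w z =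
      (((k + 1).factorial : ℝ))⁻¹ * ∑ σ : Equiv.Perm (Fin (k + 1)),
        (if z = v ∘ ⇑σ⁻¹ then sr σ * (cliqueInd G z * (γ z * w.w z)) else 0) := by
    intro z
    rw [testForm, skewSym_def]
    rw [show cliqueInd G z * ((((k + 1).factorial : ℝ))⁻¹ *
        ∑ σ : Equiv.Perm (Fin (k + 1)), sr σ * (if z ∘ ⇑σ = v then (1 : ℝ) else 0)) * γ z * w.w z
      = (((k + 1).factorial : ℝ))⁻¹ * ∑ σ : Equiv.Perm (Fin (k + 1)),
        (sr σ * (if z ∘ ⇑σ = v then (1 : ℝ) else 0)) * (cliqueInd G z * (γ z * w.w z)) from by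
        rw [← Finset.sum_mul]; ring]
    congr 1
    refine Finset.sum_congr rfl fun σ _ => ?_
    by_cases h : z ∘ ⇑σ = v
    · rw [if_pos h, if_pos ((comp_eq_iff z v σ).mp h)]; ring
    · rw [if_neg h, if_neg (fun hc => h ((comp_eq_iff z v σ).mpr hc))]; ring
  rw [formInner, Finset.sum_congr rfl (fun z _ => h1 z), ← Finset.mul_sum, Finset.sum_comm]
  have h2 : ∀ σ : Equiv.Perm (Fin (k + 1)),
      (∑ z : Fin (k + 1) → X,
        (if z = v ∘ ⇑σ⁻¹ then sr σ * (cliqueInd G z * (γ z * w.w z)) else 0)) =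
      γ v * w.w v := by
    intro σ
    rw [Finset.sum_ite_eq' Finset.univ (v ∘ ⇑σ⁻¹)
      (fun z => sr σ * (cliqueInd G z * (γ z * w.w z))), if_pos (Finset.mem_univ _)]
    rw [cliqueInd_comp, cliqueInd, if_pos hcl, hγ σ⁻¹ v, w.symm σ⁻¹ v, sr_inv]
    show sr σ * (1 * (sr σ * γ v * w.w v)) = γ v * w.w v
    linear_combination (γ v * w.w v) * sr_sq σ
  rw [Finset.sum_congr rfl (fun σ _ => h2 σ), Finset.sum_const, Finset.card_univ,
    Fintype.card_perm, Fintype.card_fin, nsmul_eq_mul]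
  field_simp


/-- solvability of the boundary value problem `δdω = 0` in the interior
with prescribed boundary values `φ` on boundary `(k+1)`-cliques. -/
theorem bvp_solvable {X : Type*} [Fintype X] (G : SimpleGraph X) (B : Set X)
    (hB : IsBoundary G B) (w : GraphWeight G) (k : ℕ)
    (φ : (Fin (k + 1) → X) → ℝ) (hφ : IsBdryForm G B k φ) :
    ∃ ω : (Fin (k + 1) → X) → ℝ, IsGraphForm G k ω ∧
      (∀ v : Fin (k + 1) → X, (∀ i, v i ∉ B) → gdelta w (gd G ω) v = 0) ∧
      (∀ v : Fin (k + 1) → X, IsBdryTuple G B v → ω v = φ v) := by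
  classical
  set U : Submodule ℝ ((Fin (k + 1) → X) → ℝ) := Usub G B k with hUdef
  let Bf : ((Fin (k + 1) → X) → ℝ) →ₗ[ℝ] ((Fin (k + 1) → X) → ℝ) →ₗ[ℝ] ℝ :=
    (formInnerLM w (k + 1)).compl₁₂ (gdLM G k) (gdLM G k)
  have hBf : ∀ a b, Bf a b = formInner w (gd G a) (gd G b) := fun a b => rfl
  have hBfsymm : ∀ a b, Bf a b = Bf b a := fun a b => by
    rw [hBf, hBf]; exact formInner_comm w _ _
  let L : U →ₗ[ℝ] Module.Dual ℝ U := Bf.compl₁₂ U.subtype U.subtype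
  have hL : ∀ (u ψ : U), L u ψ = Bf u.1 ψ.1 := fun u ψ => rfl
  have hsurj : Function.Surjective (Module.Dual.eval ℝ U) := by
    have h := (Module.evalEquiv ℝ U).surjective
    rwa [show ⇑(Module.evalEquiv ℝ U) = ⇑(Module.Dual.eval ℝ U) from by
      rw [← Module.evalEquiv_toLinearMap]; rfl] at h
  have hcomp : L = L.dualMap.comp (Module.Dual.eval ℝ U) := by
    ext u ψ
    show L u ψ = L ψ u
    rw [hL, hL]; exact hBfsymm _ _
  have hrange : LinearMap.range L = (LinearMap.ker L).dualAnnihilator := by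
    have h1 : LinearMap.range (Module.Dual.eval ℝ U) = ⊤ := LinearMap.range_eq_top.mpr hsurj
    calc LinearMap.range L
        = LinearMap.range (L.dualMap.comp (Module.Dual.eval ℝ U)) := by rw [← hcomp]
      _ = LinearMap.range L.dualMap := LinearMap.range_comp_of_range_eq_top _ h1
      _ = (LinearMap.ker L).dualAnnihilator := LinearMap.range_dualMap_eq_dualAnnihilator_ker L
  -- particular extension of the boundary data
  set ω₀ : (Fin (k + 1) → X) → ℝ := bdryExt G B φ with hω₀def
  have hω₀1 : ∀ z, ¬ IsTupleClique G z → ω₀ z = 0 := bdryExt_support φ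
  have hω₀2 : ∀ (σ : Equiv.Perm (Fin (k + 1))) (z : Fin (k + 1) → X),
      ω₀ (z ∘ σ) = sr σ * ω₀ z := bdryExt_skew φ
  have hω₀3 : ∀ z, IsBdryTuple G B z → ω₀ z = φ z := bdryExt_bdry φ hφ
  -- the linear functional given by the particular extension
  let cF : Module.Dual ℝ U := (Bf ω₀).comp U.subtype
  have hmem : -cF ∈ LinearMap.range L := by
    rw [hrange, Submodule.mem_dualAnnihilator]
    intro ψ hψ
    have hBψψ : Bf ψ.1 ψ.1 = 0 := by
      have h0 : L ψ ψ = 0 := by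
        rw [LinearMap.mem_ker] at hψ
        rw [hψ]; rfl
      rw [hL] at h0; exact h0
    have hz : ∀ z, gd G (ψ : (Fin (k + 1) → X) → ℝ) z * w.w z = 0 := fun z =>
      formInner_self_zero w (by rw [← hBf]; exact hBψψ) z
    have hcψ : cF ψ = 0 := by
      show Bf ω₀ ψ.1 = 0
      rw [hBf, formInner]
      rw [Finset.sum_eq_zero, mul_zero]
      intro z _
      rw [mul_assoc, hz z, mul_zero]
    show (-cF) ψ = 0
    rw [LinearMap.neg_apply, hcψ, neg_zero]
  obtain ⟨u, hu⟩ := hmem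
  obtain ⟨hu1, hu2, hu3⟩ := u.2
  refine ⟨ω₀ + (u : (Fin (k + 1) → X) → ℝ), ⟨?_, ?_⟩, ?_, ?_⟩
  · -- support on cliques
    intro z hz
    simp only [Pi.add_apply, hω₀1 z hz, hu1 z hz, add_zero]
  · -- skew-symmetry
    intro σ z
    have h1 : (ω₀ + (u : (Fin (k + 1) → X) → ℝ)) (z ∘ σ) =
        sr σ * (ω₀ + (u : (Fin (k + 1) → X) → ℝ)) z := by
      simp only [Pi.add_apply, hω₀2 σ z, hu2 σ z]; ring
    exact h1
  · -- the interior equation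
    intro v hv
    set ω : (Fin (k + 1) → X) → ℝ := ω₀ + (u : (Fin (k + 1) → X) → ℝ) with hωdef
    by_cases hcl : IsTupleClique G v
    · have hωskew : ∀ (σ : Equiv.Perm (Fin (k + 1))) (z : Fin (k + 1) → X),
          ω (z ∘ σ) = sr σ * ω z := fun σ z => by
        simp only [hωdef, Pi.add_apply, hω₀2 σ z, hu2 σ z]; ring
      have hdω : ∀ (σ : Equiv.Perm (Fin (k + 2))) (z : Fin (k + 2) → X),
          gd G ω (z ∘ σ) = sr σ * gd G ω z := gd_skew ω hωskew
      have hδdω : ∀ (σ : Equiv.Perm (Fin (k + 1))) (z : Fin (k + 1) → X),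
          gdelta w (gd G ω) (z ∘ σ) = sr σ * gdelta w (gd G ω) z :=
        gdelta_skew w (gd G ω) hdω
      -- orthogonality against every test form in U
      have horthog : ∀ ψ : U, Bf ω ψ.1 = 0 := by
        intro ψ
        have h1 : Bf ω ψ.1 = Bf ω₀ ψ.1 + Bf (u : (Fin (k + 1) → X) → ℝ) ψ.1 := by
          rw [hωdef, map_add]; rfl
        have h2 : Bf (u : (Fin (k + 1) → X) → ℝ) ψ.1 = -(Bf ω₀ ψ.1) := by
          have h3 : L u ψ = (-cF) ψ := by rw [hu]
          rw [hL] at h3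
          rw [h3, LinearMap.neg_apply]
          rfl
        rw [h1, h2, add_neg_cancel]
      have hψU : testForm G v ∈ U := ⟨testForm_support v, testForm_skew v, testForm_bdry v hv⟩
      have h0 : Bf ω (testForm G v) = 0 := horthog ⟨testForm G v, hψU⟩
      have hchain : formInner w (testForm G v) (gdelta w (gd G ω)) = 0 := by
        rw [← adjoint_gd_gdelta w (testForm G v) (gd G ω) hdω]
        rw [formInner_comm, ← hBf]
        exact h0
      have hval := testForm_inner w v hcl (gdelta w (gd G ω)) hδdω
      rw [hchain] at hval
      have hfac : (((k + 1).factorial : ℝ))⁻¹ ≠ 0 := by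
        simp [Nat.factorial_ne_zero]
      have hwv : w.w v ≠ 0 := ne_of_gt (w.pos v hcl)
      have h5 : gdelta w (gd G ω) v * w.w v = 0 := by
        rcases mul_eq_zero.mp hval.symm with h' | h'
        · exact absurd h' hfac
        · exact h'
      rcases mul_eq_zero.mp h5 with h' | h'
      · exact h'
      · exact absurd h' hwv
    · -- degenerate tuple: the weight vanishes
      show (w.w v)⁻¹ * _ = 0
      rw [w.eq_zero v hcl]
      simp
  · -- the boundary values
    intro z hz
    simp only [Pi.add_apply, hω₀3 z hz, hu3 z hz, add_zero]

end GraphHodge
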